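/- Suppose Γ is ω-clique regular and a non-boring strongly regular graph srg(n,k,λ,μ). Then Γ and C_ω(Γ) are strongly regular graphs with the same parameters if and only if k = ω(ω−1). -/

import Mathlib

open SimpleGraph

/-- A graph is `ω`-clique regular if its edge set is nonempty and every edge lies in a
unique clique of order `ω`. -/
def IsCliqueRegular {V : Type*} (G : SimpleGraph V) (ω : ℕ) : Prop :=
  G.edgeSet.Nonempty ∧
    ∀ ⦃x y : V⦄, G.Adj x y → ∃! s : Finset V, G.IsNClique ω s ∧ x ∈ s ∧ y ∈ s

/-- The `ω`-clique graph: vertices are the `ω`-cliques of `G`, two distinct cliques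
adjacent iff they have nonempty intersection. -/
def cliqueGraph {V : Type*} [DecidableEq V] (G : SimpleGraph V) (ω : ℕ) :
    SimpleGraph {s : Finset V // G.IsNClique ω s} where
  Adj a b := a ≠ b ∧ (a.val ∩ b.val).Nonempty
  symm := ⟨fun a b => by
    rintro ⟨h1, h2⟩
    exact ⟨h1.symm, by rwa [Finset.inter_comm]⟩⟩
  loopless := ⟨fun a => by simp⟩

instance {V : Type*} [DecidableEq V] (G : SimpleGraph V) (ω : ℕ) :
    DecidableRel (cliqueGraph G ω).Adj :=
  fun a b => inferInstanceAs (Decidable (a ≠ b ∧ (a.val ∩ b.val).Nonempty))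

/-!
Let `N` be the incidence matrix between the vertices and the `ω`-cliques of `Γ`. Since every edge
lies in exactly one `ω`-clique, `N Nᵀ = A + r I`, where `r (ω - 1) = k` counts the cliques through a
vertex, and `Nᵀ N = A_C + ω I`. Double counting incidences gives `|C| ω (ω - 1) = n k`, so `C_ω(Γ)`
has `n` vertices iff `k = ω (ω - 1)`, and then `r = ω`: `N` is square with all line sums `ω`.
The strongly regular equation of `A` becomes `p(N Nᵀ) = μ J` for a monic quadratic `p`. Then
`E = p(Nᵀ N) - μ J` satisfies `N E = 0`, hence `E² = p(0) E`, and `tr E = 0` because `N Nᵀ` and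
`Nᵀ N` have the same power traces. A symmetric real matrix with these properties vanishes, so `A_C`
satisfies the same equation as `A`.
-/

open Finset Matrix

namespace Matrix

variable {l m n R : Type*}

theorem mul_of_one_of_sum_eq [Fintype n] [NonAssocSemiring R] {N : Matrix m n R} {r : R}
    (h : ∀ i, ∑ j, N i j = r) : N * (of 1 : Matrix n l R) = r • of 1 := by
  ext i j
  simp [mul_apply, h]

theorem of_one_mul_of_sum_eq [Fintype m] [NonAssocSemiring R] {N : Matrix m n R} {r : R}
    (h : ∀ j, ∑ i, N i j = r) : (of 1 : Matrix l m R) * N = r • of 1 := by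
  ext i j
  simp [mul_apply, h]

theorem trace_of_one [Fintype m] [AddCommMonoidWithOne R] :
    (of 1 : Matrix m m R).trace = Fintype.card m := by
  simp [trace]

theorem card_eq_card_of_sum_eq [Fintype m] [Fintype n] [Semiring R] [IsDomain R] [CharZero R]
    {N : Matrix m n R} {r : R} (hr : r ≠ 0)
    (hrow : ∀ i, ∑ j, N i j = r) (hcol : ∀ j, ∑ i, N i j = r) :
    Fintype.card m = Fintype.card n := by
  have h : ∑ i, ∑ j, N i j = ∑ j, ∑ i, N i j := sum_comm
  simp only [hrow, hcol, sum_const, card_univ, nsmul_eq_mul] at h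
  exact_mod_cast mul_right_cancel₀ hr h

theorem trace_transpose_mul_self_sq [Fintype m] [Fintype n] [DecidableEq m] [DecidableEq n]
    [CommSemiring R] (N : Matrix m n R) :
    ((Nᵀ * N) ^ 2).trace = ((N * Nᵀ) ^ 2).trace := by
  rw [sq, sq, Matrix.mul_assoc, trace_mul_comm]
  simp only [Matrix.mul_assoc]

theorem eq_zero_of_isSymm_of_mul_self_eq_smul [Fintype m] {E : Matrix m m ℝ} (hE : E.IsSymm)
    {c : ℝ} (h : E * E = c • E) (htr : E.trace = 0) : E = 0 := by
  rw [← trace_conjTranspose_mul_self_eq_zero_iff, conjTranspose_eq_transpose_of_trivial, hE.eq,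
    h, trace_smul, htr, smul_zero]

theorem sq_add_smul_one_eq_iff [Fintype m] [DecidableEq m] [CommRing R] {X : Matrix m m R}
    {k l μ w : R} :
    X ^ 2 = k • 1 + l • X + μ • (of 1 - 1 - X) ↔
      (X + w • 1) ^ 2 = (2 * w + l - μ) • (X + w • 1) + (k - μ - w * (w + l - μ)) • 1
        + μ • of 1 := by
  have hsq : (X + w • 1) ^ 2 = X ^ 2 + (2 * w) • X + (w ^ 2) • 1 := by
    simp only [sq, Matrix.add_mul, Matrix.mul_add, Matrix.smul_mul, Matrix.mul_smul,
      Matrix.one_mul, Matrix.mul_one]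
    module
  rw [hsq]
  constructor <;> intro h <;> linear_combination (norm := module) h

section ConstantLineSums

variable [Fintype m] [Fintype n] [DecidableEq m] [DecidableEq n] {N : Matrix m n ℝ} {r a b c : ℝ}

theorem mul_sq_transpose_mul_self_sub_eq_zero (hrow : ∀ i, ∑ j, N i j = r)
    (hcol : ∀ j, ∑ i, N i j = r) (h : (N * Nᵀ) ^ 2 = a • (N * Nᵀ) + b • 1 + c • of 1) :
    N * ((Nᵀ * N) ^ 2 - a • (Nᵀ * N) - b • 1 - c • of 1) = 0 := by
  have hJN : (of 1 : Matrix m m ℝ) * N = r • of 1 := of_one_mul_of_sum_eq hcol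
  calc N * ((Nᵀ * N) ^ 2 - a • (Nᵀ * N) - b • 1 - c • of 1)
      = ((N * Nᵀ) ^ 2 - a • (N * Nᵀ) - b • 1) * N - c • (N * (of 1 : Matrix n n ℝ)) := by
        simp only [sq, Matrix.mul_sub, Matrix.sub_mul, Matrix.mul_smul, Matrix.smul_mul,
          Matrix.mul_one, Matrix.one_mul, Matrix.mul_assoc]
    _ = 0 := by
        rw [mul_of_one_of_sum_eq hrow, ← hJN, h]
        simp only [Matrix.sub_mul, Matrix.add_mul, Matrix.smul_mul, Matrix.one_mul]
        abel

theorem transpose_mul_self_sq_eq (hr : r ≠ 0) (hrow : ∀ i, ∑ j, N i j = r)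
    (hcol : ∀ j, ∑ i, N i j = r) (h : (N * Nᵀ) ^ 2 = a • (N * Nᵀ) + b • 1 + c • of 1) :
    (Nᵀ * N) ^ 2 = a • (Nᵀ * N) + b • 1 + c • of 1 := by
  obtain ⟨E, hE⟩ : ∃ E, E = (Nᵀ * N) ^ 2 - a • (Nᵀ * N) - b • 1 - c • (of 1 : Matrix n n ℝ) :=
    ⟨_, rfl⟩
  have hNE : N * E = 0 := hE ▸ mul_sq_transpose_mul_self_sub_eq_zero hrow hcol h
  have hBE : Nᵀ * N * E = 0 := by rw [Matrix.mul_assoc, hNE, Matrix.mul_zero]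
  have hJE : (of 1 : Matrix n n ℝ) * E = 0 := by
    rw [← inv_smul_smul₀ hr (of 1 : Matrix n n ℝ), ← of_one_mul_of_sum_eq hcol (l := n),
      smul_mul_assoc, Matrix.mul_assoc, hNE, Matrix.mul_zero, smul_zero]
  have hEE : E * E = (-b) • E := by
    have : E * E = Nᵀ * N * (Nᵀ * N * E) - a • (Nᵀ * N * E) - b • E
        - c • ((of 1 : Matrix n n ℝ) * E) := by
      nth_rewrite 1 [hE]
      simp only [sq, Matrix.sub_mul, Matrix.smul_mul, Matrix.one_mul, Matrix.mul_assoc]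
    rw [this, hBE, hJE]
    simp only [Matrix.mul_zero, smul_zero, sub_zero, zero_sub, neg_smul]
  have htrE : E.trace = 0 := by
    have htr := congrArg trace h
    simp only [hE, trace_sub, trace_add, trace_smul, trace_one, trace_of_one,
      trace_transpose_mul_self_sq, trace_mul_comm Nᵀ N, card_eq_card_of_sum_eq hr hrow hcol]
      at htr ⊢
    rw [htr]
    abel
  have hEsymm : E.IsSymm := by
    have hB : (Nᵀ * N).IsSymm := by simp [IsSymm, transpose_mul]
    have hJ : (of 1 : Matrix n n ℝ).IsSymm := IsSymm.ext fun _ _ => rfl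
    rw [hE]
    exact (((hB.pow 2).sub (hB.smul a)).sub (isSymm_one.smul b)).sub (hJ.smul c)
  have hE0 := eq_zero_of_isSymm_of_mul_self_eq_smul hEsymm hEE htrE
  rw [hE, sub_eq_zero, sub_eq_iff_eq_add, sub_eq_iff_eq_add] at hE0
  rw [hE0]
  abel

end ConstantLineSums

end Matrix

namespace SimpleGraph

variable {V : Type*}

section StronglyRegular

variable [DecidableEq V] {G : SimpleGraph V} [DecidableRel G.Adj]

variable (G) in
theorem adjMatrix_compl (α : Type*) [AddCommGroup α] [One α] :
    Gᶜ.adjMatrix α = of 1 - 1 - G.adjMatrix α := by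
  rw [← adjMatrix_completeGraph_eq_of_one_sub_one,
    ← IsCompl.adjMatrix_add_adjMatrix_eq_adjMatrix_completeGraph (α := α)
      (isCompl_compl : IsCompl G Gᶜ)]
  exact (add_sub_cancel_left _ _).symm

variable [Fintype V]

theorem isSRGWith_of_adjMatrix_sq {α : Type*} [Semiring α] [CharZero α] {n k ℓ μ : ℕ}
    (hcard : Fintype.card V = n)
    (h : G.adjMatrix α ^ 2 = k • 1 + ℓ • G.adjMatrix α + μ • Gᶜ.adjMatrix α) :
    G.IsSRGWith n k ℓ μ := by
  have hentry (v w : V) :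
      (Fintype.card (G.commonNeighbors v w) : α) = (G.adjMatrix α ^ 2) v w := by
    rw [adjMatrix_pow_apply_eq_card_walk]
    exact_mod_cast (Fintype.card_congr (G.walkLengthTwoEquivCommonNeighbors v w)).symm
  refine ⟨hcard, fun v => ?_, fun v w hvw => ?_, fun v w hne hvw => ?_⟩
  · have hv := congr_fun₂ h v v
    simp only [sq, adjMatrix_mul_self_apply_self, Matrix.add_apply, Matrix.smul_apply,
      one_apply_eq, adjMatrix_apply, SimpleGraph.irrefl, if_false, smul_zero, add_zero] at hv
    exact_mod_cast hv.trans (nsmul_one k)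
  · have hvw' := hentry v w
    simp only [h, Matrix.add_apply, Matrix.smul_apply, one_apply_ne hvw.ne, adjMatrix_apply,
      compl_adj, hvw, not_true, and_false, if_true, if_false, smul_zero, zero_add, add_zero]
      at hvw'
    exact_mod_cast hvw'.trans (nsmul_one ℓ)
  · have hvw' := hentry v w
    simp only [h, Matrix.add_apply, Matrix.smul_apply, one_apply_ne hne, adjMatrix_apply,
      compl_adj, hvw, ne_eq, hne, not_false_eq_true, and_self, if_true, if_false, smul_zero,
      zero_add] at hvw'
    exact_mod_cast hvw'.trans (nsmul_one μ)

end StronglyRegular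

variable {G : SimpleGraph V} {ω : ℕ}

local notation "𝓛" => {s : Finset V // G.IsNClique ω s}

namespace IsCliqueRegular

theorem exists_adj (hcr : IsCliqueRegular G ω) : ∃ x y, G.Adj x y := by
  obtain ⟨e, he⟩ := hcr.1
  induction e using Sym2.ind with
  | _ x y => exact ⟨x, y, he⟩

theorem two_le (hcr : IsCliqueRegular G ω) : 2 ≤ ω := by
  obtain ⟨x, y, hxy⟩ := hcr.exists_adj
  obtain ⟨s, ⟨hs, hxs, hys⟩, -⟩ := hcr.2 hxy
  rw [← hs.card_eq]
  exact one_lt_card.2 ⟨x, hxs, y, hys, hxy.ne⟩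

theorem eq_of_mem_of_mem (hcr : IsCliqueRegular G ω) {x y : V} (hxy : x ≠ y) {s t : 𝓛}
    (hxs : x ∈ s.1) (hys : y ∈ s.1) (hxt : x ∈ t.1) (hyt : y ∈ t.1) : s = t :=
  Subtype.ext <| (hcr.2 (s.2.isClique hxs hys hxy)).unique ⟨s.2, hxs, hys⟩ ⟨t.2, hxt, hyt⟩

theorem card_inter_le_one [DecidableEq V] (hcr : IsCliqueRegular G ω) {s t : 𝓛} (hst : s ≠ t) :
    #(s.1 ∩ t.1) ≤ 1 := by
  refine card_le_one.2 fun x hx y hy => ?_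
  by_contra hxy
  rw [mem_inter] at hx hy
  exact hst (hcr.eq_of_mem_of_mem hxy hx.1 hy.1 hx.2 hy.2)

variable [Fintype V] [DecidableEq V] [DecidableRel G.Adj]

theorem neighborFinset_eq_biUnion (hcr : IsCliqueRegular G ω) (x : V) :
    G.neighborFinset x = ({s : 𝓛 | x ∈ s.1} : Finset 𝓛).biUnion fun s => s.1.erase x := by
  ext y
  simp only [mem_neighborFinset, mem_biUnion, mem_filter, mem_univ, true_and, mem_erase]
  constructor
  · intro hxy
    obtain ⟨s, ⟨hs, hxs, hys⟩, -⟩ := hcr.2 hxy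
    exact ⟨⟨s, hs⟩, hxs, hxy.ne', hys⟩
  · rintro ⟨s, hxs, hyx, hys⟩
    exact s.2.isClique hxs hys hyx.symm

theorem card_filter_mem_mul_eq_degree (hcr : IsCliqueRegular G ω) (x : V) :
    #{s : 𝓛 | x ∈ s.1} * (ω - 1) = G.degree x := by
  rw [← card_neighborFinset_eq_degree, hcr.neighborFinset_eq_biUnion, card_biUnion]
  · rw [sum_const_nat]
    intro s hs
    rw [card_erase_of_mem (mem_filter.1 hs).2, s.2.card_eq]
  · intro s hs t ht hst
    rw [mem_coe, mem_filter] at hs ht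
    rw [Function.onFun, Finset.disjoint_left]
    intro y hys hyt
    rw [mem_erase] at hys hyt
    exact hst (hcr.eq_of_mem_of_mem hys.1.symm hs.2 hys.2 ht.2 hyt.2)

end IsCliqueRegular

variable [DecidableEq V]

variable (G ω) in
def cliqueIncMatrix (R : Type*) [Zero R] [One R] : Matrix V 𝓛 R :=
  of fun x s => if x ∈ s.1 then 1 else 0

section Incidence

variable [Fintype V] {R : Type*} [NonAssocSemiring R]

theorem sum_cliqueIncMatrix_col (s : 𝓛) : ∑ x, G.cliqueIncMatrix ω R x s = ω := by
  simp [cliqueIncMatrix, ← s.2.card_eq]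

theorem transpose_mul_cliqueIncMatrix_apply (s t : 𝓛) :
    ((G.cliqueIncMatrix ω R)ᵀ * G.cliqueIncMatrix ω R) s t = #(s.1 ∩ t.1) := by
  simp [cliqueIncMatrix, mul_apply, ← ite_and, filter_and, inter_comm]

theorem IsCliqueRegular.transpose_mul_cliqueIncMatrix (hcr : IsCliqueRegular G ω) :
    (G.cliqueIncMatrix ω R)ᵀ * G.cliqueIncMatrix ω R =
      (cliqueGraph G ω).adjMatrix R + (ω : R) • 1 := by
  ext s t
  rw [transpose_mul_cliqueIncMatrix_apply]
  obtain rfl | hst := eq_or_ne s t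
  · simp [s.2.card_eq]
  have hcard : #(s.1 ∩ t.1) = if (cliqueGraph G ω).Adj s t then 1 else 0 := by
    split_ifs with hadj
    · exact le_antisymm (hcr.card_inter_le_one hst) (card_pos.2 hadj.2)
    · exact card_eq_zero.2 (not_nonempty_iff_eq_empty.1 fun h => hadj ⟨hst, h⟩)
  simp [hcard, hst, adjMatrix_apply]

variable [DecidableRel G.Adj]

theorem sum_cliqueIncMatrix_row (x : V) :
    ∑ s, G.cliqueIncMatrix ω R x s = #{s : 𝓛 | x ∈ s.1} := by
  simp [cliqueIncMatrix]

theorem cliqueIncMatrix_mul_transpose_apply (x y : V) :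
    (G.cliqueIncMatrix ω R * (G.cliqueIncMatrix ω R)ᵀ) x y = #{s : 𝓛 | x ∈ s.1 ∧ y ∈ s.1} := by
  simp [cliqueIncMatrix, mul_apply, ← ite_and, and_comm]

theorem IsCliqueRegular.cliqueIncMatrix_mul_transpose (hcr : IsCliqueRegular G ω) {r : ℕ}
    (hr : ∀ x, #{s : 𝓛 | x ∈ s.1} = r) :
    G.cliqueIncMatrix ω R * (G.cliqueIncMatrix ω R)ᵀ = G.adjMatrix R + (r : R) • 1 := by
  ext x y
  rw [cliqueIncMatrix_mul_transpose_apply]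
  obtain rfl | hxy := eq_or_ne x y
  · simp [hr]
  have hcard : #{s : 𝓛 | x ∈ s.1 ∧ y ∈ s.1} = if G.Adj x y then 1 else 0 := by
    split_ifs with hadj
    · obtain ⟨s, ⟨hs, hxs, hys⟩, -⟩ := hcr.2 hadj
      refine le_antisymm (card_le_one.2 fun s hs t ht => ?_) (card_pos.2 ⟨⟨s, hs⟩, ?_⟩)
      · rw [mem_filter] at hs ht
        exact hcr.eq_of_mem_of_mem hxy hs.2.1 hs.2.2 ht.2.1 ht.2.2
      · simp [hxs, hys]
    · exact card_eq_zero.2 (filter_eq_empty_iff.2 fun s _ h => hadj (s.2.isClique h.1 h.2 hxy))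
  simp [hcard, hxy, adjMatrix_apply]

end Incidence

namespace IsCliqueRegular

variable [Fintype V] [DecidableRel G.Adj]

theorem card_cliques_mul (hcr : IsCliqueRegular G ω) {k : ℕ} (hreg : G.IsRegularOfDegree k) :
    Fintype.card 𝓛 * (ω * (ω - 1)) = Fintype.card V * k := by
  have h : ∑ x, ∑ s, G.cliqueIncMatrix ω ℕ x s = ∑ s, ∑ x, G.cliqueIncMatrix ω ℕ x s := sum_comm
  simp only [sum_cliqueIncMatrix_row, sum_cliqueIncMatrix_col, Nat.cast_id, sum_const,
    card_univ, smul_eq_mul] at h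
  calc Fintype.card 𝓛 * (ω * (ω - 1)) = (∑ x, #{s : 𝓛 | x ∈ s.1}) * (ω - 1) := by
        rw [h, mul_assoc]
    _ = ∑ x, G.degree x := by
        rw [sum_mul]
        exact sum_congr rfl fun x _ => hcr.card_filter_mem_mul_eq_degree x
    _ = Fintype.card V * k := by simp [hreg.degree_eq]

theorem isSRGWith_cliqueGraph (hcr : IsCliqueRegular G ω) {n k ℓ μ : ℕ}
    (hG : G.IsSRGWith n k ℓ μ) (hk : k = ω * (ω - 1)) :
    (cliqueGraph G ω).IsSRGWith n k ℓ μ := by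
  have hω := hcr.two_le
  have hlines (x : V) : #{s : 𝓛 | x ∈ s.1} = ω :=
    Nat.eq_of_mul_eq_mul_right (m := ω - 1) (by omega) <| by
      rw [hcr.card_filter_mem_mul_eq_degree, hG.regular x, hk]
  have hcard : Fintype.card 𝓛 = n := by
    have h := hcr.card_cliques_mul hG.regular
    rw [hG.card, hk] at h
    exact Nat.eq_of_mul_eq_mul_right (Nat.mul_pos (by omega) (by omega)) h
  refine isSRGWith_of_adjMatrix_sq (α := ℝ) hcard ?_
  have hA := hG.matrix_eq (α := ℝ)
  simp only [adjMatrix_compl, ← Nat.cast_smul_eq_nsmul ℝ] at hA ⊢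
  rw [sq_add_smul_one_eq_iff (w := (ω : ℝ)), ← hcr.cliqueIncMatrix_mul_transpose hlines] at hA
  rw [sq_add_smul_one_eq_iff (w := (ω : ℝ)), ← hcr.transpose_mul_cliqueIncMatrix]
  refine transpose_mul_self_sq_eq (r := ω) (Nat.cast_ne_zero.2 (by omega)) (fun x => ?_)
    sum_cliqueIncMatrix_col hA
  rw [sum_cliqueIncMatrix_row, hlines]

end IsCliqueRegular

end SimpleGraph

theorem stmt16_general {V : Type*} [Fintype V] [DecidableEq V] (G : SimpleGraph V)
    [DecidableRel G.Adj] (ω n k l μ : ℕ)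
    (hcr : IsCliqueRegular G ω)
    (hsrg : G.IsSRGWith n k l μ) :
    (cliqueGraph G ω).IsSRGWith n k l μ ↔ k = ω * (ω - 1) := by
  refine ⟨fun hC => ?_, hcr.isSRGWith_cliqueGraph hsrg⟩
  obtain ⟨x, -, -⟩ := hcr.exists_adj
  have hn : 0 < n := hsrg.card ▸ Fintype.card_pos_iff.2 ⟨x⟩
  have h := hcr.card_cliques_mul hsrg.regular
  rw [hC.card, hsrg.card] at h
  exact (Nat.eq_of_mul_eq_mul_left hn h).symm

/-- For an `ω`-clique regular, non-boring `srg(n,k,λ,μ)`, the graph `Γ` and its clique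
graph `C_ω(Γ)` are strongly regular with the same parameters iff `k = ω(ω−1)`. -/
theorem stmt16 {V : Type*} [Fintype V] [DecidableEq V] (G : SimpleGraph V)
    [DecidableRel G.Adj] (ω n k l μ : ℕ)
    (hcr : IsCliqueRegular G ω)
    (hsrg : G.IsSRGWith n k l μ)
    (hnonboring : ∃ r s : ℝ,
      spectrum ℝ (G.adjMatrix ℝ) = {(k : ℝ), r, s} ∧ r < (k : ℝ) ∧ s < r) :
    (cliqueGraph G ω).IsSRGWith n k l μ ↔ k = ω * (ω - 1) :=
  stmt16_general G ω n k l μ hcr hsrg
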